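/- arXiv:1110.0164 — 2 statements merged into one kernel-verified Lean document; each statement's English description precedes it below -/
import Mathlib

section
/- Let n ≥ 1, and let G be a group acting on a simplicial set X by simplicial automorphisms such that for every m the action of G on the set Xₘ of m-simplices is free. Then the induced action of G on Pₙ(X) is free in every degree, and the canonical map of simplicial sets Pₙ(X)/G → Pₙ(X/G), induced by applying Pₙ to the quotient map X → X/G and the universal property of the degreewise quotient, is an isomorphism of simplicial sets. -/
open CategoryTheory Simplicial Opposite

/-- An action of a group `G` on a simplicial set `X` by simplicial automorphisms. -/
structure SSetAction (G : Type) [Group G] (X : SSet.{0}) where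
  smul : ∀ ⦃m : SimplexCategoryᵒᵖ⦄, G → X.obj m → X.obj m
  one_smul : ∀ ⦃m : SimplexCategoryᵒᵖ⦄ (x : X.obj m), smul 1 x = x
  mul_smul : ∀ ⦃m : SimplexCategoryᵒᵖ⦄ (g h : G) (x : X.obj m),
    smul (g * h) x = smul g (smul h x)
  map_smul : ∀ ⦃m m' : SimplexCategoryᵒᵖ⦄ (f : m ⟶ m') (g : G) (x : X.obj m),
    X.map f (smul g x) = smul g (X.map f x)

namespace SSetAction

variable {G : Type} [Group G] {X : SSet.{0}} (σ : SSetAction G X)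

/-- The orbit relation of the action, in each simplicial degree. -/
def rel (m : SimplexCategoryᵒᵖ) (x y : X.obj m) : Prop := ∃ g : G, σ.smul g x = y

/-- The degreewise quotient simplicial set `X/G`. -/
def quotient : SSet.{0} where
  obj m := Quot (σ.rel m)
  map f := ↾(Quot.lift (fun x => Quot.mk _ (X.map f x))
    (fun x y ⟨g, hg⟩ => Quot.sound ⟨g, by rw [← σ.map_smul, hg]⟩))
  map_id m := by
    ext x
    induction x using Quot.ind
    simp [FunctorToTypes.map_id_apply]
  map_comp f g := by
    ext x
    induction x using Quot.ind
    simp [FunctorToTypes.map_comp_apply]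

/-- The quotient map of simplicial sets `X ⟶ X/G`. -/
def quotientHom : X ⟶ σ.quotient where
  app m := ↾(fun x => Quot.mk _ x)
  naturality _ _ f := rfl

/-- The simplicial automorphism of `X` given by the action of `g`. -/
def toHom (g : G) : X ⟶ X where
  app m := ↾(fun x => σ.smul g x)
  naturality m m' f := by
    ext x
    exact (σ.map_smul f g x).symm

/-- The action of `G` on `F.obj X` induced by functoriality of `F : SSet ⥤ SSet`. -/
def push (F : SSet.{0} ⥤ SSet.{0}) : SSetAction G (F.obj X) where
  smul m g y := (F.map (σ.toHom g)).app m y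
  one_smul m y := by
    have h : σ.toHom (1 : G) = 𝟙 X := by
      apply NatTrans.ext
      ext m x
      exact σ.one_smul x
    show (F.map (σ.toHom 1)).app m y = y
    rw [h, F.map_id]
    rfl
  mul_smul m g h y := by
    have hc : σ.toHom (g * h) = σ.toHom h ≫ σ.toHom g := by
      apply NatTrans.ext
      ext m x
      exact σ.mul_smul g h x
    show (F.map (σ.toHom (g * h))).app m y =
      (F.map (σ.toHom g)).app m ((F.map (σ.toHom h)).app m y)
    rw [hc, F.map_comp]
    rfl
  map_smul m m' f g y := (NatTrans.naturality_apply (F.map (σ.toHom g)) f y).symm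

/-- The canonical comparison map `(F X)/G ⟶ F (X/G)` induced by applying `F` to the
quotient map `X ⟶ X/G`. -/
def quotientCompare (F : SSet.{0} ⥤ SSet.{0}) :
    (σ.push F).quotient ⟶ F.obj σ.quotient where
  app m := ↾(Quot.lift (fun y => (F.map σ.quotientHom).app m y) (by
    rintro y z ⟨g, rfl⟩
    have hq : σ.toHom g ≫ σ.quotientHom = σ.quotientHom := by
      apply NatTrans.ext
      ext k x
      exact (Quot.sound ⟨g, rfl⟩).symm
    show (F.map σ.quotientHom).app m y =
      (F.map (σ.toHom g) ≫ F.map σ.quotientHom).app m y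
    rw [← F.map_comp, hq]))
  naturality m m' f := by
    ext y
    induction y using Quot.ind
    exact NatTrans.naturality_apply (F.map σ.quotientHom) f _

end SSetAction

/-!
A `p`-simplex of `cosk k Y` is a family of simplices of `Y`, one for each simplex of `Δ[p]` of
dimension at most `k`, compatible with the simplicial operators. As `G` acts freely, a simplex of
`X/G` has exactly one lift to `X` through any given lift of one of its faces.

Two families in `X` with the same image in `X/G` therefore differ by the element of `G` that
matches their `0`-th vertices: the edges `0 → i` propagate it to every vertex, and then to every
simplex. To lift a family from `X/G`, lift the vertex `0`, lift every vertex `i` as the end of the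
lift of the edge `0 → i`, and lift each simplex through the chosen lift of its vertex `0`. The
triangles `0 → i → j` show that every edge lifted from a chosen vertex ends at a chosen vertex, so
all vertices of the lifted simplices are the chosen ones, and uniqueness of lifts makes the family
compatible.
-/

open SimplexCategory

namespace SSetAction

variable {G : Type} [Group G] {X : SSet.{0}} (σ : SSetAction G X)

def IsFree : Prop :=
  ∀ (m : SimplexCategoryᵒᵖ) (g : G), g ≠ 1 → ∀ x : X.obj m, σ.smul g x ≠ x

lemma equivalence_rel (m : SimplexCategoryᵒᵖ) : Equivalence (σ.rel m) where
  refl x := ⟨1, σ.one_smul x⟩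
  symm := by
    rintro x y ⟨g, rfl⟩
    exact ⟨g⁻¹, by rw [← σ.mul_smul, inv_mul_cancel, σ.one_smul]⟩
  trans := by
    rintro x y z ⟨g, rfl⟩ ⟨h, rfl⟩
    exact ⟨h * g, σ.mul_smul h g x⟩

variable {σ}

lemma exists_smul_eq_of_mk_eq {m : SimplexCategoryᵒᵖ} {x y : X.obj m}
    (h : Quot.mk (σ.rel m) x = Quot.mk (σ.rel m) y) : ∃ g : G, σ.smul g x = y :=
  (σ.equivalence_rel m).eqvGen_iff.mp (Quot.eqvGen_exact h)

lemma mk_smul {m : SimplexCategoryᵒᵖ} (g : G) (x : X.obj m) :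
    Quot.mk (σ.rel m) (σ.smul g x) = Quot.mk (σ.rel m) x :=
  (Quot.sound ⟨g, rfl⟩).symm

lemma quotient_map_mk {m m' : SimplexCategoryᵒᵖ} (f : m ⟶ m') (x : X.obj m) :
    σ.quotient.map f (Quot.mk _ x) = Quot.mk _ (X.map f x) :=
  rfl

lemma toHom_comp_quotientHom (g : G) : σ.toHom g ≫ σ.quotientHom = σ.quotientHom := by
  ext m x
  exact mk_smul g x

lemma exists_lift_map_eq {m m' : SimplexCategoryᵒᵖ} (f : m ⟶ m') {q : σ.quotient.obj m}
    {v : X.obj m'} (hv : Quot.mk _ v = σ.quotient.map f q) :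
    ∃ z, Quot.mk _ z = q ∧ X.map f z = v := by
  obtain ⟨z, rfl⟩ := q.exists_rep
  obtain ⟨g, hg⟩ := exists_smul_eq_of_mk_eq hv.symm
  exact ⟨σ.smul g z, mk_smul g z, by rw [σ.map_smul, hg]⟩

namespace IsFree

lemma smul_left_injective (hσ : σ.IsFree) {m : SimplexCategoryᵒᵖ} (x : X.obj m) :
    Function.Injective (σ.smul · x) := by
  intro g h (hgh : σ.smul g x = σ.smul h x)
  by_contra hne
  refine hσ m (h⁻¹ * g) (by rwa [Ne, inv_mul_eq_one, eq_comm]) x ?_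
  rw [σ.mul_smul, hgh, ← σ.mul_smul, inv_mul_cancel, σ.one_smul]

lemma eq_of_mk_eq_of_map_eq (hσ : σ.IsFree) {m m' : SimplexCategoryᵒᵖ} (f : m ⟶ m')
    {z z' : X.obj m} (h : Quot.mk (σ.rel m) z = Quot.mk _ z') (hf : X.map f z = X.map f z') :
    z = z' := by
  obtain ⟨g, rfl⟩ := exists_smul_eq_of_mk_eq h
  obtain rfl : g = 1 := hσ.smul_left_injective (X.map f z) <| by
    simpa only [σ.map_smul, σ.one_smul] using hf.symm
  exact (σ.one_smul z).symm

end IsFree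

end SSetAction

namespace SSet

structure TruncFamily (k : ℕ) (Y : SSet.{0}) (p : SimplexCategory) where
  simplex : ∀ ⦃a : SimplexCategory⦄, a.len ≤ k → (a ⟶ p) → Y.obj (op a)
  map_simplex : ∀ ⦃a b : SimplexCategory⦄ (ha : a.len ≤ k) (hb : b.len ≤ k) (η : b ⟶ a)
    (x : a ⟶ p), Y.map η.op (simplex ha x) = simplex hb (η ≫ x)

lemma map_const_map {Y : SSet.{0}} {a b : SimplexCategory} (η : b ⟶ a)
    (i : Fin (b.len + 1)) (z : Y.obj (op a)) :
    Y.map (SimplexCategory.const ⦋0⦌ b i).op (Y.map η.op z) =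
      Y.map (SimplexCategory.const ⦋0⦌ a (η.toOrderHom i)).op z := by
  rw [← Functor.map_comp_apply, ← op_comp, SimplexCategory.const_comp]

namespace TruncFamily

variable {k : ℕ} {Y Z W : SSet.{0}} {p : SimplexCategory}

@[ext]
lemma ext {F F' : TruncFamily k Y p}
    (h : ∀ (a : SimplexCategory) (ha : a.len ≤ k) (x : a ⟶ p),
      F.simplex ha x = F'.simplex ha x) :
    F = F' := by
  obtain ⟨F, _⟩ := F
  obtain ⟨F', _⟩ := F'
  congr
  funext a ha x
  exact h a ha x

def map (F : TruncFamily k Y p) (u : Y ⟶ Z) : TruncFamily k Z p where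
  simplex a ha x := u.app _ (F.simplex ha x)
  map_simplex a b ha hb η x := by
    rw [← F.map_simplex ha hb η x, NatTrans.naturality_apply]

lemma map_map (F : TruncFamily k Y p) (u : Y ⟶ Z) (v : Z ⟶ W) :
    (F.map u).map v = F.map (u ≫ v) :=
  rfl

def vertex (F : TruncFamily k Y p) (i : Fin (p.len + 1)) : Y _⦋0⦌ :=
  F.simplex (Nat.zero_le k) (SimplexCategory.const ⦋0⦌ p i)

lemma map_const_simplex (F : TruncFamily k Y p) {a : SimplexCategory} (ha : a.len ≤ k)
    (x : a ⟶ p) (i : Fin (a.len + 1)) :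
    Y.map (SimplexCategory.const ⦋0⦌ a i).op (F.simplex ha x) = F.vertex (x.toOrderHom i) :=
  F.map_simplex ha _ _ x

def truncHomEquiv :
    ((truncation k).obj (stdSimplex.obj p) ⟶ (truncation k).obj Y) ≃ TruncFamily k Y p where
  toFun φ :=
    { simplex a ha x := φ.app (op ⟨a, ha⟩) (stdSimplex.objEquiv.symm x)
      map_simplex a b ha hb η x :=
        (NatTrans.naturality_apply φ (Quiver.Hom.op (ObjectProperty.homMk
          (X := (⟨b, hb⟩ : SimplexCategory.Truncated k)) (Y := ⟨a, ha⟩) η)) _).symm }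
  invFun F :=
    { app b := ↾(fun s => F.simplex b.unop.2 (stdSimplex.objEquiv s))
      naturality b b' η := by
        ext s
        exact (F.map_simplex b.unop.2 b'.unop.2 η.unop.hom _).symm }
  left_inv φ := by
    ext b s
    obtain ⟨x, rfl⟩ := stdSimplex.objEquiv.symm.surjective s
    rfl
  right_inv F := rfl

noncomputable def coskEquiv (m : SimplexCategoryᵒᵖ) :
    ((cosk k).obj Y).obj m ≃ TruncFamily k Y m.unop :=
  (yonedaEquiv.symm.trans ((coskAdj k).homEquiv _ _).symm).trans truncHomEquiv

lemma coskEquiv_map (u : Y ⟶ Z) (m : SimplexCategoryᵒᵖ) (y : ((cosk k).obj Y).obj m) :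
    coskEquiv m (((cosk k).map u).app m y) = (coskEquiv m y).map u := by
  simp only [coskEquiv, Equiv.trans_apply]
  rw [← yonedaEquiv_symm_comp]
  exact congrArg truncHomEquiv (Adjunction.homEquiv_naturality_right_symm _ _ _)

end TruncFamily

end SSet

namespace SSetAction

open SSet

variable {G : Type} [Group G] {X : SSet.{0}} {σ : SSetAction G X} {k : ℕ} {p : SimplexCategory}

lemma IsFree.push_cosk (hσ : σ.IsFree) (k : ℕ) : (σ.push (cosk k)).IsFree := by
  intro m g hg y (hy : ((cosk k).map (σ.toHom g)).app m y = y)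
  have hfamily := (TruncFamily.coskEquiv_map (σ.toHom g) m y).symm.trans
    (congrArg (TruncFamily.coskEquiv m) hy)
  exact hσ _ g hg _ (congrArg (·.vertex 0) hfamily)

lemma IsFree.eq_of_map_quotientHom_eq_of_vertex_eq (hσ : σ.IsFree) (hk : 1 ≤ k)
    {F F' : TruncFamily k X p} (h : F.map σ.quotientHom = F'.map σ.quotientHom)
    (h0 : F.vertex 0 = F'.vertex 0) : F = F' := by
  have hmk {a : SimplexCategory} (ha : a.len ≤ k) (x : a ⟶ p) :
      Quot.mk _ (F.simplex ha x) = Quot.mk _ (F'.simplex ha x) :=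
    congrArg (fun F => F.simplex ha x) h
  have hvertex (i : Fin (p.len + 1)) : F.vertex i = F'.vertex i := by
    have hedge : F.simplex hk (mkOfLe (n := p.len) 0 i (Fin.zero_le i)) =
        F'.simplex hk (mkOfLe (n := p.len) 0 i (Fin.zero_le i)) :=
      hσ.eq_of_mk_eq_of_map_eq (SimplexCategory.const ⦋0⦌ ⦋1⦌ 0).op (hmk hk _) <| by
        rw [F.map_const_simplex, F'.map_const_simplex]
        exact h0
    have hend := congrArg (X.map (SimplexCategory.const ⦋0⦌ ⦋1⦌ 1).op) hedge
    rwa [F.map_const_simplex, F'.map_const_simplex] at hend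
  ext a ha x
  refine hσ.eq_of_mk_eq_of_map_eq (SimplexCategory.const ⦋0⦌ a 0).op (hmk ha x) ?_
  rw [F.map_const_simplex, F'.map_const_simplex, hvertex]

lemma IsFree.exists_map_toHom_eq (hσ : σ.IsFree) (hk : 1 ≤ k) {F F' : TruncFamily k X p}
    (h : F.map σ.quotientHom = F'.map σ.quotientHom) : ∃ g : G, F.map (σ.toHom g) = F' := by
  obtain ⟨g, hg⟩ := exists_smul_eq_of_mk_eq (congrArg (·.vertex 0) h)
  refine ⟨g, hσ.eq_of_map_quotientHom_eq_of_vertex_eq hk ?_ hg⟩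
  rw [TruncFamily.map_map, toHom_comp_quotientHom, h]

lemma mk_map_eq_of_mk_eq (f : TruncFamily k σ.quotient p) {a b : SimplexCategory}
    {ha : a.len ≤ k} (hb : b.len ≤ k) {x : a ⟶ p} {z : X.obj (op a)}
    (hz : Quot.mk _ z = f.simplex ha x) (η : b ⟶ a) :
    Quot.mk _ (X.map η.op z) = f.simplex hb (η ≫ x) := by
  rw [← quotient_map_mk, hz, f.map_simplex]

lemma IsFree.target_eq_of_source_eq (hσ : σ.IsFree) (hk : 2 ≤ k)
    {f : TruncFamily k σ.quotient p} {y₀ : X _⦋0⦌} (hy₀ : Quot.mk _ y₀ = f.vertex 0)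
    {L : Fin (p.len + 1) → X _⦋0⦌}
    (hL : ∀ (e : ⦋1⦌ ⟶ p), e.toOrderHom 0 = 0 → ∀ z : X _⦋1⦌,
      Quot.mk _ z = f.simplex (one_le_two.trans hk) e →
      X.map (SimplexCategory.const ⦋0⦌ ⦋1⦌ 0).op z = y₀ →
      X.map (SimplexCategory.const ⦋0⦌ ⦋1⦌ 1).op z = L (e.toOrderHom 1))
    (e : ⦋1⦌ ⟶ p) (z : X _⦋1⦌) (hz : Quot.mk _ z = f.simplex (one_le_two.trans hk) e)
    (hz0 : X.map (SimplexCategory.const ⦋0⦌ ⦋1⦌ 0).op z = L (e.toOrderHom 0)) :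
    X.map (SimplexCategory.const ⦋0⦌ ⦋1⦌ 1).op z = L (e.toOrderHom 1) := by
  have h1 : (⦋1⦌ : SimplexCategory).len ≤ k := one_le_two.trans hk
  let T : ⦋2⦌ ⟶ p := mkOfLeComp (n := p.len) 0 (e.toOrderHom 0) (e.toOrderHom 1)
    (Fin.zero_le _) (e.toOrderHom.monotone (Fin.zero_le 1))
  obtain ⟨t, ht, ht0⟩ := exists_lift_map_eq (SimplexCategory.const ⦋0⦌ ⦋2⦌ 0).op
    (q := f.simplex hk T) (v := y₀) (by rw [f.map_const_simplex]; exact hy₀)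
  have ht_vertex (j : Fin 3) (hj : 0 < j) :
      X.map (SimplexCategory.const ⦋0⦌ ⦋2⦌ j).op t = L (T.toOrderHom j) := by
    have hedge := hL (mkOfLe (n := 2) 0 j hj.le ≫ T) rfl _ (mk_map_eq_of_mk_eq f h1 ht _)
      (by rw [map_const_map]; exact ht0)
    rwa [map_const_map] at hedge
  have hz_eq : z = X.map (mkOfLe (n := 2) 1 2 (by decide)).op t := by
    refine hσ.eq_of_mk_eq_of_map_eq (SimplexCategory.const ⦋0⦌ ⦋1⦌ 0).op
      (hz.trans ?_) ?_
    · rw [mk_map_eq_of_mk_eq f h1 ht]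
      congr 1
      exact Hom.ext_one_left _ _
    · rw [map_const_map]
      exact hz0.trans (ht_vertex 1 (by decide)).symm
  rw [hz_eq, map_const_map]
  exact ht_vertex 2 (by decide)

lemma IsFree.exists_vertex_lift (hσ : σ.IsFree) (hk : 2 ≤ k)
    (f : TruncFamily k σ.quotient p) :
    ∃ L : Fin (p.len + 1) → X _⦋0⦌, (∀ i, Quot.mk _ (L i) = f.vertex i) ∧
      ∀ (e : ⦋1⦌ ⟶ p) (z : X _⦋1⦌), Quot.mk _ z = f.simplex (one_le_two.trans hk) e →
        X.map (SimplexCategory.const ⦋0⦌ ⦋1⦌ 0).op z = L (e.toOrderHom 0) →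
        X.map (SimplexCategory.const ⦋0⦌ ⦋1⦌ 1).op z = L (e.toOrderHom 1) := by
  have h1 : (⦋1⦌ : SimplexCategory).len ≤ k := one_le_two.trans hk
  obtain ⟨y₀, hy₀⟩ := (f.vertex 0).exists_rep
  have hedge (i : Fin (p.len + 1)) : ∃ z, Quot.mk _ z = f.simplex h1 (mkOfLe (n := p.len) 0 i
      (Fin.zero_le i)) ∧ X.map (SimplexCategory.const ⦋0⦌ ⦋1⦌ 0).op z = y₀ :=
    exists_lift_map_eq _ (by rw [f.map_const_simplex]; exact hy₀)
  choose E hE hE₀ using hedge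
  let L i := X.map (SimplexCategory.const ⦋0⦌ ⦋1⦌ 1).op (E i)
  refine ⟨L, fun i => mk_map_eq_of_mk_eq f (Nat.zero_le k) (hE i) _,
    hσ.target_eq_of_source_eq hk hy₀ (L := L) fun e he z hz hz0 => ?_⟩
  have he : e = mkOfLe (n := p.len) 0 (e.toOrderHom 1) (Fin.zero_le _) :=
    Hom.ext_one_left _ _ he
  rw [he] at hz
  rw [hσ.eq_of_mk_eq_of_map_eq _ (hz.trans (hE _).symm) (hz0.trans (hE₀ _).symm)]

lemma vertex_eq_of_vertex_zero_eq (hk : 1 ≤ k) {f : TruncFamily k σ.quotient p}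
    {L : Fin (p.len + 1) → X _⦋0⦌}
    (hL : ∀ (e : ⦋1⦌ ⟶ p) (z : X _⦋1⦌), Quot.mk _ z = f.simplex hk e →
      X.map (SimplexCategory.const ⦋0⦌ ⦋1⦌ 0).op z = L (e.toOrderHom 0) →
      X.map (SimplexCategory.const ⦋0⦌ ⦋1⦌ 1).op z = L (e.toOrderHom 1))
    {a : SimplexCategory} {ha : a.len ≤ k} {x : a ⟶ p} {z : X.obj (op a)}
    (hz : Quot.mk _ z = f.simplex ha x)
    (hz0 : X.map (SimplexCategory.const ⦋0⦌ a 0).op z = L (x.toOrderHom 0))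
    (i : Fin (a.len + 1)) :
    X.map (SimplexCategory.const ⦋0⦌ a i).op z = L (x.toOrderHom i) := by
  have hedge := hL (mkOfLe (n := a.len) 0 i (Fin.zero_le i) ≫ x) _
    (mk_map_eq_of_mk_eq f hk hz _) (by rw [map_const_map]; exact hz0)
  rwa [map_const_map] at hedge

lemma IsFree.exists_map_quotientHom_eq (hσ : σ.IsFree) (hk : 2 ≤ k)
    (f : TruncFamily k σ.quotient p) : ∃ F : TruncFamily k X p, F.map σ.quotientHom = f := by
  obtain ⟨L, hLmk, hL⟩ := hσ.exists_vertex_lift hk f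
  have hlift (a : SimplexCategory) (ha : a.len ≤ k) (x : a ⟶ p) :
      ∃ z, Quot.mk _ z = f.simplex ha x ∧
        X.map (SimplexCategory.const ⦋0⦌ a 0).op z = L (x.toOrderHom 0) :=
    exists_lift_map_eq _ (by rw [f.map_const_simplex]; exact hLmk _)
  choose F hF hF₀ using hlift
  refine ⟨⟨fun a ha x => F a ha x, fun a b ha hb η x => ?_⟩, ?_⟩
  · refine hσ.eq_of_mk_eq_of_map_eq (SimplexCategory.const ⦋0⦌ b 0).op
      ((mk_map_eq_of_mk_eq f hb (hF a ha x) η).trans (hF b hb _).symm) ?_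
    rw [map_const_map, vertex_eq_of_vertex_zero_eq _ hL (hF a ha x) (hF₀ a ha x), hF₀]
    rfl
  · ext a ha x
    exact hF a ha x

lemma IsFree.bijective_quotientCompare_cosk_app (hσ : σ.IsFree) (hk : 2 ≤ k)
    (m : SimplexCategoryᵒᵖ) : Function.Bijective ((σ.quotientCompare (cosk k)).app m) := by
  have hcompare (y : ((cosk k).obj X).obj m) :
      TruncFamily.coskEquiv m ((σ.quotientCompare (cosk k)).app m (Quot.mk _ y)) =
        (TruncFamily.coskEquiv m y).map σ.quotientHom :=
    TruncFamily.coskEquiv_map _ m y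
  constructor
  · rintro ⟨y⟩ ⟨z⟩ hyz
    obtain ⟨g, hg⟩ := hσ.exists_map_toHom_eq (one_le_two.trans hk)
      ((hcompare y).symm.trans ((congrArg _ hyz).trans (hcompare z)))
    refine Quot.sound ⟨g, (TruncFamily.coskEquiv m).injective ?_⟩
    exact (TruncFamily.coskEquiv_map _ m y).trans hg
  · intro w
    obtain ⟨F, hF⟩ := hσ.exists_map_quotientHom_eq hk (TruncFamily.coskEquiv m w)
    refine ⟨Quot.mk _ ((TruncFamily.coskEquiv m).symm F), (TruncFamily.coskEquiv m).injective ?_⟩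
    rw [hcompare, Equiv.apply_symm_apply, hF]

end SSetAction

/-- Let `n ≥ 1` and let `G` act freely (in every degree) on a simplicial set
`X`.  Then the induced action of `G` on `Pₙ X = cosk_{n+1} (tr_{n+1} X)` is free in every
degree, and the canonical map `Pₙ(X)/G ⟶ Pₙ(X/G)` is an isomorphism of simplicial sets. -/
theorem cosk_quotient_comparison_isIso
    (n : ℕ) (hn : 1 ≤ n) (G : Type) [Group G] (X : SSet.{0}) (σ : SSetAction G X)
    (hfree : ∀ (m : SimplexCategoryᵒᵖ) (g : G), g ≠ 1 → ∀ x : X.obj m, σ.smul g x ≠ x) :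
    (∀ (m : SimplexCategoryᵒᵖ) (g : G), g ≠ 1 →
      ∀ y : ((SSet.cosk (n + 1)).obj X).obj m, (σ.push (SSet.cosk (n + 1))).smul g y ≠ y) ∧
    IsIso (σ.quotientCompare (SSet.cosk (n + 1))) := by
  have hσ : σ.IsFree := hfree
  refine ⟨hσ.push_cosk (n + 1), ?_⟩
  rw [NatTrans.isIso_iff_isIso_app]
  intro m
  rw [isIso_iff_bijective]
  exact hσ.bijective_quotientCompare_cosk_app (by omega) m
end

section
/- Let G be a group and let C be a ℤ-indexed chain complex of G-modules such that for some N ≥ 0 one has H_i(C) = 0 whenever |i| > N. Then there exists a chain complex C^b of G-modules with C^b_i = 0 for all |i| > N together with a zigzag of quasi-isomorphisms C → D ← C^b for some chain complex D of G-modules (so C and C^b are isomorphic in the derived category of G-modules). Moreover, if for every i the G-action on C_i factors through a finite quotient of G, then C^b may be chosen so that the G-action on the entire complex C^b factors through a single finite quotient of G. -/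
open CategoryTheory Limits

/-- A normal finite-index subgroup `H ≤ G` acts trivially on the `G`-representation `V`. -/
def ActsTriviallyOn {G : Type} [Group G] (H : Subgroup G) (V : Rep ℤ G) : Prop :=
  ∀ h ∈ H, V.ρ h = 1

/-!
Truncate `C` canonically twice: the quotient `D = τ_{≤ N} C` replaces `C_N` by the cokernel
`C_N / im d_{N+1}` and kills the higher degrees, and the subcomplex `C^b = τ_{≥ -N} D` replaces
`D_{-N}` by the kernel `ker d_{-N}` and kills the lower degrees. Each truncation map is a
quasi-isomorphism because the homology it discards vanishes. In every degree `C^b_i` is a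
subquotient of `C_i`, so a subgroup acting trivially on `C_i` acts trivially on `C^b_i`; only
the finitely many degrees `|i| ≤ N` are nonzero, and the intersection of the corresponding
finite-index normal subgroups acts trivially on all of `C^b`.
-/

namespace ComplexShape

/-- `n ↦ p - n`, whose image is the set of degrees `≤ p` of a chain complex. -/
def embeddingDownIntLE (p : ℤ) : Embedding (up ℕ) (down ℤ) := (embeddingUpIntLE p).op

/-- `n ↦ p + n`, whose image is the set of degrees `≥ p` of a chain complex. -/
def embeddingDownIntGE (p : ℤ) : Embedding (down ℕ) (down ℤ) := (embeddingUpIntGE p).op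

instance (p : ℤ) : (embeddingDownIntLE p).IsTruncGE :=
  inferInstanceAs (embeddingUpIntLE p).op.IsTruncGE

instance (p : ℤ) : (embeddingDownIntGE p).IsTruncLE :=
  inferInstanceAs (embeddingUpIntGE p).op.IsTruncLE

lemma notMem_range_embeddingDownIntLE_iff (p n : ℤ) :
    (∀ i, (embeddingDownIntLE p).f i ≠ n) ↔ p < n :=
  notMem_range_embeddingUpIntLE_iff p n

lemma notMem_range_embeddingDownIntGE_iff (p n : ℤ) :
    (∀ i, (embeddingDownIntGE p).f i ≠ n) ↔ n < p :=
  notMem_range_embeddingUpIntGE_iff p n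

end ComplexShape

namespace ChainComplex

open ComplexShape HomologicalComplex

variable {A : Type*} [Category A] [Abelian A] (K : ChainComplex A ℤ)

lemma quasiIso_πTruncGE_embeddingDownIntLE {p : ℤ} (hK : ∀ i, p < i → K.ExactAt i) :
    QuasiIso (K.πTruncGE (embeddingDownIntLE p)) := by
  rw [quasiIso_πTruncGE_iff_isSupported]
  exact ⟨fun i hi => hK i ((notMem_range_embeddingDownIntLE_iff p i).1 hi)⟩

lemma quasiIso_ιTruncLE_embeddingDownIntGE {p : ℤ} (hK : ∀ i, i < p → K.ExactAt i) :
    QuasiIso (K.ιTruncLE (embeddingDownIntGE p)) := by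
  rw [quasiIso_ιTruncLE_iff_isSupported]
  exact ⟨fun i hi => hK i ((notMem_range_embeddingDownIntGE_iff p i).1 hi)⟩

lemma isZero_truncGE_embeddingDownIntLE_X {p i : ℤ} (h : p < i) :
    IsZero ((K.truncGE (embeddingDownIntLE p)).X i) :=
  isZero_X_of_isStrictlySupported _ _ i ((notMem_range_embeddingDownIntLE_iff p i).2 h)

lemma isZero_truncLE_embeddingDownIntGE_X {p i : ℤ} (h : i < p) :
    IsZero ((K.truncLE (embeddingDownIntGE p)).X i) :=
  isZero_X_of_isStrictlySupported _ _ i ((notMem_range_embeddingDownIntGE_iff p i).2 h)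

theorem exists_quasiIso_zigzag_of_exactAt {a b : ℤ}
    (hK : ∀ i, i < a ∨ b < i → K.ExactAt i) :
    ∃ (L D : ChainComplex A ℤ) (f : K ⟶ D) (g : L ⟶ D),
      (∀ i, i < a ∨ b < i → IsZero (L.X i)) ∧ QuasiIso f ∧ QuasiIso g ∧
        (∀ i, Epi (f.f i)) ∧ ∀ i, Mono (g.f i) := by
  set D := K.truncGE (embeddingDownIntLE b)
  set f := K.πTruncGE (embeddingDownIntLE b)
  set g := D.ιTruncLE (embeddingDownIntGE a)
  have hf : QuasiIso f := K.quasiIso_πTruncGE_embeddingDownIntLE fun i hi => hK i (.inr hi)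
  have hD : ∀ i, i < a → D.ExactAt i := fun i hi =>
    (exactAt_iff_of_quasiIsoAt f i).1 (hK i (.inl hi))
  refine ⟨_, D, f, g, fun i hi => ?_, hf, quasiIso_ιTruncLE_embeddingDownIntGE D hD,
    fun i => inferInstance, fun i => inferInstance⟩
  rcases hi with hi | hi
  · exact isZero_truncLE_embeddingDownIntGE_X D hi
  · exact (K.isZero_truncGE_embeddingDownIntLE_X hi).of_mono (g.f i)

end ChainComplex

namespace Subgroup

variable {G : Type*} [Group G]

theorem exists_normal_finiteIndex_le {ι : Type*} (s : Finset ι) (H : ι → Subgroup G)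
    (hn : ∀ i, (H i).Normal) (hf : ∀ i, (H i).FiniteIndex) :
    ∃ K : Subgroup G, K.Normal ∧ K.FiniteIndex ∧ ∀ i ∈ s, K ≤ H i :=
  ⟨⨅ i ∈ s, H i, normal_iInf_normal fun i => normal_iInf_normal fun _ => hn i,
    finiteIndex_iInf' _ fun i _ => hf i, fun _ hi => iInf₂_le _ hi⟩

end Subgroup

namespace ActsTriviallyOn

variable {G : Type} [Group G] {H : Subgroup G} {V W : Rep ℤ G}

lemma anti {H' : Subgroup G} (hle : H' ≤ H) (hV : ActsTriviallyOn H V) :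
    ActsTriviallyOn H' V :=
  fun h hh => hV h (hle hh)

lemma of_isZero (hV : IsZero V) : ActsTriviallyOn H V := by
  have := (Rep.isZero_iff (M := V)).1 hV
  exact fun _ _ => DFunLike.ext _ _ fun _ => Subsingleton.elim _ _

lemma of_mono (f : V ⟶ W) [Mono f] (hW : ActsTriviallyOn H W) : ActsTriviallyOn H V := by
  intro h hh
  refine DFunLike.ext _ _ fun v => (Rep.mono_iff_injective f).1 inferInstance ?_
  change f.hom (V.ρ h v) = f.hom v
  rw [Rep.hom_comm_apply, hW h hh]
  rfl

lemma of_epi (f : V ⟶ W) [Epi f] (hV : ActsTriviallyOn H V) : ActsTriviallyOn H W := by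
  intro h hh
  refine DFunLike.ext _ _ fun w => ?_
  obtain ⟨v, rfl⟩ := (Rep.epi_iff_surjective f).1 inferInstance w
  change W.ρ h (f.hom v) = f.hom v
  rw [← Rep.hom_comm_apply, hV h hh]
  rfl

end ActsTriviallyOn

/-- Let `C` be a `ℤ`-indexed chain complex of `G`-modules whose homology
vanishes in degrees `|i| > N`.  Then `C` is quasi-isomorphic (via a zigzag `C → D ← C^b`)
to a complex `C^b` concentrated in degrees `|i| ≤ N`.  Moreover, if the `G`-action on each
`C_i` factors through a finite quotient of `G`, then `C^b` may be chosen so that the action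
on the whole complex factors through a single finite quotient. -/
theorem chainComplex_bounded_replacement
    (G : Type) [Group G] (N : ℕ)
    (C : ChainComplex (Rep ℤ G) ℤ)
    (hH : ∀ i : ℤ, (N : ℤ) < |i| → IsZero (C.homology i)) :
    (∃ (Cb D : ChainComplex (Rep ℤ G) ℤ) (f : C ⟶ D) (g : Cb ⟶ D),
      (∀ i : ℤ, (N : ℤ) < |i| → IsZero (Cb.X i)) ∧ QuasiIso f ∧ QuasiIso g) ∧
    ((∀ i : ℤ, ∃ H : Subgroup G, H.Normal ∧ H.FiniteIndex ∧ ActsTriviallyOn H (C.X i)) →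
      ∃ (Cb D : ChainComplex (Rep ℤ G) ℤ) (f : C ⟶ D) (g : Cb ⟶ D),
        (∀ i : ℤ, (N : ℤ) < |i| → IsZero (Cb.X i)) ∧ QuasiIso f ∧ QuasiIso g ∧
        ∃ H : Subgroup G, H.Normal ∧ H.FiniteIndex ∧
          ∀ i : ℤ, ActsTriviallyOn H (Cb.X i)) := by
  have hout (i : ℤ) : (N : ℤ) < |i| ↔ i < -N ∨ N < i := by rw [lt_abs]; omega
  obtain ⟨Cb, D, f, g, hCb, hf, hg, hfe, hgm⟩ := C.exists_quasiIso_zigzag_of_exactAt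
    fun i hi => (C.exactAt_iff_isZero_homology i).2 (hH i ((hout i).2 hi))
  have hCb' (i : ℤ) (hi : (N : ℤ) < |i|) : IsZero (Cb.X i) := hCb i ((hout i).1 hi)
  refine ⟨⟨Cb, D, f, g, hCb', hf, hg⟩, fun hfin => ?_⟩
  choose Hs hn hfi htriv using hfin
  obtain ⟨H, hHn, hHfi, hle⟩ :=
    Subgroup.exists_normal_finiteIndex_le (Finset.Icc (-N : ℤ) N) Hs hn hfi
  refine ⟨Cb, D, f, g, hCb', hf, hg, H, hHn, hHfi, fun i => ?_⟩
  by_cases hi : (N : ℤ) < |i|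
  · exact .of_isZero (hCb' i hi)
  · have hiIcc : i ∈ Finset.Icc (-N : ℤ) N := Finset.mem_Icc.2 (abs_le.1 (not_lt.1 hi))
    exact (((htriv i).anti (hle i hiIcc)).of_epi (f.f i)).of_mono (g.f i)
end
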